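/- The CbN ptq-translation preserves typing: if Γ ⊢ M : A is derivable in the simply typed λ-calculus, then pΓ ⊢ M^n : pA is derivable in the ptq-calculus, where M^n is the Call-by-Name translation. -/
import Mathlib


namespace PTQ

/-- Implicational (intuitionistic) type/formula expressions. -/
inductive Fm : Type
  | base : ℕ → Fm
  | imp : Fm → Fm → Fm

mutual
/-- p-terms: `x`, `λ<x,k>.u`, `λk.u`. -/
inductive PTm : Type
  | var : ℕ → PTm
  | lamPair : ℕ → ETm → PTm
  | lamK : ETm → PTm
/-- t-terms: `*`, `k`, `<p,t>`, `λx.u` (a single t-variable name `k` suffices). -/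
inductive TTm : Type
  | star : TTm
  | kvar : TTm
  | pair : PTm → TTm → TTm
  | lamX : ℕ → ETm → TTm
/-- q-terms: `λ̄k.u`. -/
inductive QTm : Type
  | lamBar : ETm → QTm
/-- e-terms: `t;p` and `q t`. -/
inductive ETm : Type
  | seq : TTm → PTm → ETm
  | app : QTm → TTm → ETm
end

mutual
/-- substitution of a p-term for a p-variable. -/
def psubP (p : PTm) (x : ℕ) : PTm → PTm
  | .var y => if y = x then p else .var y
  | .lamPair y u => if y = x then .lamPair y u else .lamPair y (psubE p x u)
  | .lamK u => .lamK (psubE p x u)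
def psubT (p : PTm) (x : ℕ) : TTm → TTm
  | .star => .star
  | .kvar => .kvar
  | .pair p' t => .pair (psubP p x p') (psubT p x t)
  | .lamX y u => if y = x then .lamX y u else .lamX y (psubE p x u)
def psubQ (p : PTm) (x : ℕ) : QTm → QTm
  | .lamBar u => .lamBar (psubE p x u)
def psubE (p : PTm) (x : ℕ) : ETm → ETm
  | .seq t p' => .seq (psubT p x t) (psubP p x p')
  | .app q t => .app (psubQ p x q) (psubT p x t)
end

mutual
/-- substitution of a t-term for the free occurrences of the t-variable `k`. -/
def ksubT (s : TTm) : TTm → TTm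
  | .star => .star
  | .kvar => s
  | .pair p t => .pair p (ksubT s t)
  | .lamX y u => .lamX y (ksubE s u)
def ksubE (s : TTm) : ETm → ETm
  | .seq t p => .seq (ksubT s t) p
  | .app q t => .app q (ksubT s t)
end

mutual
/-- substitution of a t-term for the occurrences of the constant `*`. -/
def ssubT (s : TTm) : TTm → TTm
  | .star => s
  | .kvar => .kvar
  | .pair p t => .pair p (ssubT s t)
  | .lamX y u => .lamX y (ssubE s u)
def ssubE (s : TTm) : ETm → ETm
  | .seq t p => .seq (ssubT s t) p
  | .app q t => .app q (ssubT s t)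
end

/-- the `*`-composition `t ∘ t' = t'[t/*]` on t-terms. -/
def compT (t t' : TTm) : TTm := ssubT t t'
/-- the `*`-composition `t ∘ u = u[t/*]` extended to e-terms. -/
def compE (t : TTm) (u : ETm) : ETm := ssubE t u

mutual
/-- a t-term is t-closed when it has no free occurrence of the t-variable `k`. -/
def tClosed : TTm → Prop
  | .star => True
  | .kvar => False
  | .pair _ t => tClosed t
  | .lamX _ u => eClosed u
def eClosed : ETm → Prop
  | .seq t _ => tClosed t
  | .app _ t => tClosed t
end

/-- typing contexts for p-variables. -/
abbrev Ctx := ℕ → Option Fm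

def upd (Γ : Ctx) (x : ℕ) (A : Fm) : Ctx := fun y => if y = x then some A else Γ y

/-- the δ-part of a type environment: either `k : tA` or `* : tA`. -/
inductive TDel : Type
  | k : Fm → TDel
  | star : Fm → TDel

mutual
inductive PTy : Ctx → PTm → Fm → Prop
  | var {Γ : Ctx} {x A} : Γ x = some A → PTy Γ (.var x) A
  | lamPair {Γ x A B u} : ETy (upd Γ x A) (.k B) u → PTy Γ (.lamPair x u) (.imp A B)
  | lamK {Γ A u} : ETy Γ (.k A) u → PTy Γ (.lamK u) A
inductive TTy : Ctx → TDel → TTm → Fm → Prop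
  | kvar {Γ A} : TTy Γ (.k A) .kvar A
  | star {Γ A} : TTy Γ (.star A) .star A
  | pair {Γ δ p t A B} : PTy Γ p A → TTy Γ δ t B → TTy Γ δ (.pair p t) (.imp A B)
  | lamX {Γ δ x A u} : ETy (upd Γ x A) δ u → TTy Γ δ (.lamX x u) A
inductive QTy : Ctx → QTm → Fm → Prop
  | lamBar {Γ A u} : ETy Γ (.k A) u → QTy Γ (.lamBar u) A
inductive ETy : Ctx → TDel → ETm → Prop
  | seq {Γ δ p t A} : PTy Γ p A → TTy Γ δ t A → ETy Γ δ (.seq t p)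
  | app {Γ δ q t A} : QTy Γ q A → TTy Γ δ t A → ETy Γ δ (.app q t)
end

/-- the control rules of the ptq-calculus (restricted to t-closed terms). -/
inductive RedCtl : ETm → ETm → Prop
  | rstar {u} : RedCtl (.seq .star (.lamK u)) (ksubE .star u)
  | rpair {p t u} : tClosed t →
      RedCtl (.seq (.pair p t) (.lamK u)) (ksubE (.pair p t) u)
  | rlam {x u p} : eClosed u → RedCtl (.seq (.lamX x u) p) (psubE p x u)
  | rq {u t} : tClosed t → RedCtl (.app (.lamBar u) t) (ksubE t u)

/-- one-step reduction of the ptq-calculus: the control rules plus the β-rule. -/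
inductive Red : ETm → ETm → Prop
  | ctl {u v} : RedCtl u v → Red u v
  | rbeta {p t x u} : tClosed t →
      Red (.seq (.pair p t) (.lamPair x u)) (ksubE t (psubE p x u))

/-- λ-terms possibly containing the hole constant `□`. -/
inductive Lam : Type
  | var : ℕ → Lam
  | hole : Lam
  | app : Lam → Lam → Lam
  | lam : ℕ → Lam → Lam

/-- substitution `M[N/x]` on λ□-terms. -/
def lsub (N : Lam) (x : ℕ) : Lam → Lam
  | .var y => if y = x then N else .var y
  | .hole => .hole
  | .app M M' => .app (lsub N x M) (lsub N x M')
  | .lam y M => if y = x then .lam y M else .lam y (lsub N x M)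

/-- hole substitution: `hsub N M = M[N/□]`. -/
def hsub (N : Lam) : Lam → Lam
  | .var y => .var y
  | .hole => N
  | .app M M' => .app (hsub N M) (hsub N M')
  | .lam y M => .lam y (hsub N M)

/-- hole composition `M ∘ N = N[M/□]`. -/
def hcomp (M N : Lam) : Lam := hsub M N

mutual
/-- the readback map (free/substituted occurrences of the t-variable `k` and of `*`
    are both read back as the hole `□`, so that `⌈a⌉ = ⌈a[*/k]⌉`). -/
def rbP : PTm → Lam
  | .var x => .var x
  | .lamPair x u => .lam x (rbE u)
  | .lamK u => rbE u
def rbT : TTm → Lam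
  | .star => .hole
  | .kvar => .hole
  | .pair p t => hsub (.app .hole (rbP p)) (rbT t)
  | .lamX x u => lsub .hole x (rbE u)
def rbQ : QTm → Lam
  | .lamBar u => rbE u
def rbE : ETm → Lam
  | .seq t p => hsub (rbP p) (rbT t)
  | .app q t => hsub (rbQ q) (rbT t)
end

/-- typing of λ□-terms: `LTy Γ H M A` means `Γ, □:H ⊢ M : A`. -/
inductive LTy : Ctx → Fm → Lam → Fm → Prop
  | var {Γ : Ctx} {H x A} : Γ x = some A → LTy Γ H (.var x) A
  | hole {Γ H} : LTy Γ H .hole H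
  | app {Γ H M N A B} : LTy Γ H M (.imp A B) → LTy Γ H N A → LTy Γ H (.app M N) B
  | lam {Γ H x M A B} : LTy (upd Γ x A) H M B → LTy Γ H (.lam x M) (.imp A B)

/-- one-step β-reduction of λ□-terms. -/
inductive Beta : Lam → Lam → Prop
  | beta {x M N} : Beta (.app (.lam x M) N) (lsub N x M)
  | appL {M M' N} : Beta M M' → Beta (.app M N) (.app M' N)
  | appR {M N N'} : Beta N N' → Beta (.app M N) (.app M N')
  | lam {x M M'} : Beta M M' → Beta (.lam x M) (.lam x M')

/-- simple typing of (hole-free) λ-terms. -/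
inductive STy : Ctx → Lam → Fm → Prop
  | var {Γ : Ctx} {x A} : Γ x = some A → STy Γ (.var x) A
  | app {Γ M N A B} : STy Γ M (.imp A B) → STy Γ N A → STy Γ (.app M N) B
  | lam {Γ x M A B} : STy (upd Γ x A) M B → STy Γ (.lam x M) (.imp A B)

def HoleFree : Lam → Prop
  | .var _ => True
  | .hole => False
  | .app M N => HoleFree M ∧ HoleFree N
  | .lam _ M => HoleFree M

inductive Value : Lam → Prop
  | var {x} : Value (.var x)
  | lam {x M} : Value (.lam x M)

def isValue : Lam → Bool
  | .var _ => true
  | .lam _ _ => true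
  | _ => false

def maxVar : Lam → ℕ
  | .var x => x
  | .hole => 0
  | .app M N => max (maxVar M) (maxVar N)
  | .lam x M => max x (maxVar M)

/-- a variable fresh for `M`. -/
def lfresh (M : Lam) : ℕ := maxVar M + 1

def updN (σ : ℕ → ℕ) (x n : ℕ) : ℕ → ℕ := fun y => if y = x then n else σ y

mutual
/-- the measure on ptq-terms (the free t-variable `k` is measured as `*`,
    so that `⟦a⟧σ = ⟦a[*/k]⟧σ`). -/
def mP (σ : ℕ → ℕ) : PTm → ℕ
  | .var x => σ x
  | .lamPair _ _ => 0
  | .lamK u => mE σ u id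
def mT (σ : ℕ → ℕ) : TTm → (ℕ → ℕ) → ℕ → ℕ
  | .star => fun f n => f n
  | .kvar => fun f n => f n
  | .pair _ _ => fun _ n => n
  | .lamX x u => fun f n => mE (updN σ x n) u f
def mQ (σ : ℕ → ℕ) : QTm → (ℕ → ℕ) → ℕ
  | .lamBar u => fun f => mE σ u f
def mE (σ : ℕ → ℕ) : ETm → (ℕ → ℕ) → ℕ
  | .seq t p => fun f => mT σ t f (mP σ p) + 1
  | .app q t => fun f => mQ σ q (mT σ t f) + 1
end

/-- control reduction sequences of a given length. -/
inductive ChainCtl : ℕ → ETm → ETm → Prop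
  | refl {u} : ChainCtl 0 u u
  | step {n u v w} : RedCtl u v → ChainCtl n v w → ChainCtl (n + 1) u w

/-- the Call-by-Name ptq-translation. -/
def cbn : Lam → PTm
  | .var x => .var x
  | .lam x M => .lamPair x (.seq .kvar (cbn M))
  | .app M N => .lamK (.seq (.pair (cbn N) .kvar) (cbn M))
  | .hole => .var 0

/-- the Call-by-Value ptq-translation. -/
def cbv : Lam → QTm
  | .var x => .lamBar (.seq .kvar (.var x))
  | .lam x M => .lamBar (.seq .kvar (.lamPair x (.app (cbv M) .kvar)))
  | .app M N => .lamBar (.app (cbv N)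
      (.lamX (lfresh (.app M N)) (.app (cbv M) (.pair (.var (lfresh (.app M N))) .kvar))))
  | .hole => .lamBar (.seq .kvar (.var 0))

/-- the Call-by-Value value-translation `V^v°`. -/
def cbvVal : Lam → PTm
  | .var x => .var x
  | .lam x M => .lamPair x (.app (cbv M) .kvar)
  | _ => .var 0

/-- the precomputed Call-by-Name translation `⟨M⟩ⁿ` into t-closed e-terms. -/
def pcbn : Lam → ETm
  | .app M N => ssubE (.pair (cbn N) .star) (pcbn M)
  | M => .seq .star (cbn M)

/-- the precomputed Call-by-Value translation `⟨M⟩ᵛ` into t-closed e-terms. -/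
def pcbv : Lam → ETm
  | .app M N =>
      if isValue N then ssubE (.pair (cbvVal N) .star) (pcbv M)
      else ssubE (.lamX (lfresh (.app M N))
        (.app (cbv M) (.pair (.var (lfresh (.app M N))) .star))) (pcbv N)
  | M => .seq .star (cbvVal M)

/-- lazy Call-by-Name one-step reduction. -/
inductive CbN : Lam → Lam → Prop
  | beta {x M N} : CbN (.app (.lam x M) N) (lsub N x M)
  | appL {M M' N} : CbN M M' → CbN (.app M N) (.app M' N)

/-- lazy Call-by-Value one-step reduction (arguments are evaluated first). -/
inductive CbV : Lam → Lam → Prop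
  | beta {x M V} : Value V → CbV (.app (.lam x M) V) (lsub V x M)
  | argR {M N N'} : CbV N N' → CbV (.app M N) (.app M N')
  | appL {M M' V} : Value V → CbV M M' → CbV (.app M V) (.app M' V)


/-- the CbN ptq-translation preserves typing. -/
theorem cbn_translation_typing (Γ : Ctx) (M : Lam) (A : Fm) (h : STy Γ M A) :
    PTy Γ (cbn M) A := by
  induction h with
  | var h => exact PTy.var h
  | app _ _ ihM ihN =>
      exact PTy.lamK (ETy.seq ihM (TTy.pair ihN TTy.kvar))
  | lam _ ih =>
      exact PTy.lamPair (ETy.seq ih TTy.kvar)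

end PTQ
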